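/- For every real y ≥ 0, 1 + y(1 − √(π/2)) + √(π/2) · y · e^{y²/8} · (1 + erf(y/√8)) ≤ (1 + √(2π) y) · e^{y²/8}. -/
import Mathlib

open Real

/-- The error function `erf(x) = (2/√π) ∫₀ˣ exp(−t²) dt`. -/
noncomputable def erf (x : ℝ) : ℝ :=
  (2 / Real.sqrt Real.pi) * ∫ t in (0:ℝ)..x, Real.exp (-t ^ 2)

lemma erf_le_one (x : ℝ) (hx : 0 ≤ x) : erf x ≤ 1 := by
  have hint : MeasureTheory.IntegrableOn (fun t : ℝ => Real.exp (-t ^ 2)) (Set.Ioi 0) := by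
    have := integrable_exp_neg_mul_sq (b := 1) one_pos
    simpa using this.integrableOn
  have h1 : (∫ t in (0:ℝ)..x, Real.exp (-t ^ 2)) ≤ ∫ t in Set.Ioi (0:ℝ), Real.exp (-t ^ 2) := by
    rw [intervalIntegral.integral_of_le hx]
    refine MeasureTheory.setIntegral_mono_set hint ?_ ?_
    · filter_upwards with t using (Real.exp_pos _).le
    · filter_upwards with t ht
      exact Set.Ioc_subset_Ioi_self ht
  have h2 : (∫ t in Set.Ioi (0:ℝ), Real.exp (-t ^ 2)) = Real.sqrt Real.pi / 2 := by
    have := integral_gaussian_Ioi 1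
    simpa using this
  have hpi : (0:ℝ) < Real.sqrt Real.pi := Real.sqrt_pos.mpr Real.pi_pos
  rw [erf]
  rw [h2] at h1
  calc (2 / Real.sqrt Real.pi) * ∫ t in (0:ℝ)..x, Real.exp (-t ^ 2)
      ≤ (2 / Real.sqrt Real.pi) * (Real.sqrt Real.pi / 2) := by
        exact mul_le_mul_of_nonneg_left h1 (by positivity)
    _ = 1 := by field_simp
  
/-- The real inequality underlying Corollary 1: the sharp MGF bound of
Theorem 3 is below the simplified bound `(1 + √(2π) y) e^{y²/8}`. -/
theorem mgf_bound_simplification (y : ℝ) (hy : 0 ≤ y) :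
    1 + y * (1 - Real.sqrt (Real.pi / 2)) +
        Real.sqrt (Real.pi / 2) * y * Real.exp (y ^ 2 / 8) *
          (1 + erf (y / Real.sqrt 8)) ≤
      (1 + Real.sqrt (2 * Real.pi) * y) * Real.exp (y ^ 2 / 8) := by
  set E := Real.exp (y ^ 2 / 8) with hE
  have hE1 : 1 ≤ E := Real.one_le_exp (by positivity)
  have hsq : (0:ℝ) ≤ Real.sqrt (Real.pi / 2) := Real.sqrt_nonneg _
  have herf : erf (y / Real.sqrt 8) ≤ 1 := erf_le_one _ (by positivity)
  have h2pi : Real.sqrt (2 * Real.pi) = 2 * Real.sqrt (Real.pi / 2) := by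
    rw [show (2:ℝ) * Real.pi = 4 * (Real.pi / 2) by ring, show (4:ℝ) * (Real.pi / 2) = 2^2 * (Real.pi/2) by norm_num,
      Real.sqrt_mul (by positivity), Real.sqrt_sq (by norm_num)]
  have hone : 1 ≤ Real.sqrt (Real.pi / 2) := by
    rw [show (1:ℝ) = Real.sqrt 1 by simp]
    exact Real.sqrt_le_sqrt (by nlinarith [Real.pi_gt_three])
  have key : Real.sqrt (Real.pi / 2) * y * E * (1 + erf (y / Real.sqrt 8)) ≤
      Real.sqrt (Real.pi / 2) * y * E * 2 := by
    refine mul_le_mul_of_nonneg_left (by linarith) (by positivity)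
  rw [h2pi]
  nlinarith [mul_le_mul_of_nonneg_left hone hy]
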